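/- arXiv:2011.01783 — 2 statements merged into one kernel-verified Lean document; each statement's English description precedes it below -/
import Mathlib

section
/- Let H₀ = λI_d with λ ≥ 1, and H_T = H₀ + Σ_{t=1}^T x_t c_t c_tᵀ where x_t ∈ {0,1} and ‖c_t‖₂ ≤ L. Then Σ_{t=1}^T x_t · min{‖c_t‖²_{H_{t-1}^{-1}}, 1} ≤ 2(log det(H_T) - log det(H₀)). -/
/-!
By the matrix determinant lemma each rank-one update multiplies the determinant by
`1 + x_t ‖c_t‖²_{H_{t-1}⁻¹}`, so `log det H_T - log det H_0` telescopes into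
`∑ log (1 + x_t ‖c_t‖²_{H_{t-1}⁻¹})`. Since `x_t ∈ {0, 1}`, each summand dominates half of
`x_t min (‖c_t‖²_{H_{t-1}⁻¹}) 1`, because `min u 1 ≤ 2 u / (1 + u) ≤ 2 log (1 + u)` for `u ≥ 0`.
-/

open Matrix

lemma Real.min_le_two_mul_log_one_add {u : ℝ} (hu : 0 ≤ u) :
    min u 1 ≤ 2 * Real.log (1 + u) := by
  have hpos : 0 < 1 + u := by linarith
  have hlog : u / (1 + u) ≤ Real.log (1 + u) := by
    calc u / (1 + u) = 1 - (1 + u)⁻¹ := by field_simp; ring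
      _ ≤ Real.log (1 + u) := Real.one_sub_inv_le_log_of_pos hpos
  have hmin : min u 1 ≤ 2 * (u / (1 + u)) := by
    rw [mul_div_assoc', le_div_iff₀ hpos]
    rcases le_total u 1 with h | h
    · rw [min_eq_left h]; nlinarith
    · rw [min_eq_right h]; linarith
  linarith

namespace Matrix

variable {n α : Type*} [Fintype n] [DecidableEq n]

theorem det_add_vecMulVec [CommRing α] {A : Matrix n n α} (hA : IsUnit A.det) (u v : n → α) :
    (A + vecMulVec u v).det = A.det * (1 + v ⬝ᵥ A⁻¹ *ᵥ u) := by
  rw [vecMulVec_eq Unit, det_add_replicateCol_mul_replicateRow hA,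
    det_unique (1 + replicateRow Unit v * A⁻¹ * replicateCol Unit u)]
  simp only [PUnit.default_eq_unit, add_apply, one_apply_eq, mul_apply, replicateRow_apply,
    replicateCol_apply, Finset.sum_mul, mul_assoc, dotProduct, mulVec, Finset.mul_sum]
  rw [Finset.sum_comm]

theorem det_add_smul_vecMulVec_self [CommRing α] {A : Matrix n n α} (hA : IsUnit A.det)
    (r : α) (v : n → α) :
    (A + r • vecMulVec v v).det = A.det * (1 + r * (v ⬝ᵥ A⁻¹ *ᵥ v)) := by
  rw [← smul_vecMulVec, det_add_vecMulVec hA, mulVec_smul, dotProduct_smul, smul_eq_mul]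

theorem PosDef.smul_one_add_sum_smul_vecMulVec {ι : Type*} (s : Finset ι) {lam : ℝ}
    (hlam : 0 < lam) {r : ι → ℝ} (hr : ∀ i, 0 ≤ r i) (v : ι → n → ℝ) :
    (lam • (1 : Matrix n n ℝ) + ∑ i ∈ s, r i • vecMulVec (v i) (v i)).PosDef := by
  refine PosDef.add_posSemidef ?_ (posSemidef_sum s fun i _ => ?_)
  · rw [smul_one_eq_diagonal]
    exact PosDef.diagonal fun _ => hlam
  · simpa using (posSemidef_vecMulVec_self_star (v i)).smul (hr i)

theorem PosDef.mul_min_le_two_mul_log_det_add_sub {A : Matrix n n ℝ} (hA : A.PosDef)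
    {r : ℝ} (hr : r = 0 ∨ r = 1) (v : n → ℝ) :
    r * min (v ⬝ᵥ A⁻¹ *ᵥ v) 1 ≤
      2 * (Real.log (A + r • vecMulVec v v).det - Real.log A.det) := by
  have hq : 0 ≤ v ⬝ᵥ A⁻¹ *ᵥ v := by
    simpa using hA.inv.posSemidef.dotProduct_mulVec_nonneg v
  rw [det_add_smul_vecMulVec_self (isUnit_iff_ne_zero.mpr hA.det_pos.ne') r v]
  rcases hr with rfl | rfl
  · simp
  · rw [Real.log_mul hA.det_pos.ne' (by linarith), one_mul, one_mul, add_sub_cancel_left]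
    exact Real.min_le_two_mul_log_one_add hq

end Matrix

theorem elliptical_potential_general
    {d : ℕ} (T : ℕ) (lam : ℝ) (hlam : 1 ≤ lam)
    (c : ℕ → Fin d → ℝ) (x : ℕ → ℝ)
    (hx : ∀ t, x t = 0 ∨ x t = 1)
    (H : ℕ → Matrix (Fin d) (Fin d) ℝ)
    (hH : ∀ s, H s = lam • (1 : Matrix (Fin d) (Fin d) ℝ) +
      ∑ t ∈ Finset.Icc 1 s, x t • vecMulVec (c t) (c t)) :
    ∑ t ∈ Finset.Icc 1 T, x t * min (c t ⬝ᵥ (H (t - 1))⁻¹.mulVec (c t)) 1 ≤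
      2 * (Real.log (H T).det - Real.log (H 0).det) := by
  have hPD : ∀ s, (H s).PosDef := fun s => hH s ▸
    PosDef.smul_one_add_sum_smul_vecMulVec _ (by linarith)
      (fun t => by rcases hx t with h | h <;> simp [h]) c
  have hstep : ∀ s, H (s + 1) = H s + x (s + 1) • vecMulVec (c (s + 1)) (c (s + 1)) := by
    intro s
    rw [hH, hH, Finset.sum_Icc_succ_top (by omega), add_assoc]
  induction T with
  | zero => simp
  | succ T ih =>
    have hT := (hPD T).mul_min_le_two_mul_log_det_add_sub (hx (T + 1)) (c (T + 1))
    rw [← hstep] at hT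
    rw [Finset.sum_Icc_succ_top (by omega), Nat.add_sub_cancel]
    linarith

/-- Elliptical potential lemma for regularized Gram matrices. -/
theorem elliptical_potential
    {d : ℕ} (T : ℕ) (lam L : ℝ) (hlam : 1 ≤ lam)
    (c : ℕ → Fin d → ℝ) (x : ℕ → ℝ)
    (hx : ∀ t, x t = 0 ∨ x t = 1)
    (hc : ∀ t, Real.sqrt (c t ⬝ᵥ c t) ≤ L)
    (H : ℕ → Matrix (Fin d) (Fin d) ℝ)
    (hH : ∀ s, H s = lam • (1 : Matrix (Fin d) (Fin d) ℝ) +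
      ∑ t ∈ Finset.Icc 1 s, x t • vecMulVec (c t) (c t)) :
    ∑ t ∈ Finset.Icc 1 T, x t * min (c t ⬝ᵥ (H (t - 1))⁻¹.mulVec (c t)) 1 ≤
      2 * (Real.log (H T).det - Real.log (H 0).det) :=
  elliptical_potential_general T lam hlam c x hx H hH
end

section
/- The divide-and-conquer algorithm that, for every candidate n_max ∈ {n : I_n = 1}, selects the k = min{m, Σ_n I_n} available clients with largest Z_n among those with τ̄_n ≤ τ̄_{n_max}, and returns the candidate solution with minimal objective, computes an exact optimizer of: minimize V·max_n{x_n τ̄_n} − Σ_n Z_n x_n subject to Σ_n x_n = min{m, Σ_n I_n}, x_n ≤ I_n, x_n ∈ {0,1}. -/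
/-!
Let `A` be any feasible selection and `n` a client of `A` with largest `τ̄`. Every client of `A`
is then qualified for the candidate `n`, so the candidate built for `n` has maximal time at most
`τ̄ n`, which is also the maximal time of `A`, while as a top-`k` choice by backlog it has backlog
sum at least that of `A`. Hence it is no worse than `A`, and the returned candidate is no worse
than it.
-/

open Finset

namespace Finset

variable {ι M : Type*} [AddCommMonoid M] [LinearOrder M] {s t : Finset ι} {f : ι → M}

theorem sum_le_sum_of_card_eq_of_forall_le [IsOrderedAddMonoid M] (hcard : #s = #t)
    (hle : ∀ a ∈ s, ∀ b ∈ t, f a ≤ f b) : ∑ a ∈ s, f a ≤ ∑ b ∈ t, f b := by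
  rcases t.eq_empty_or_nonempty with rfl | ht
  · rw [card_eq_zero.mp hcard]
  calc ∑ a ∈ s, f a ≤ #s • t.inf' ht f :=
        sum_le_card_nsmul _ _ _ fun a ha => le_inf' ht f fun b hb => hle a ha b hb
    _ = #t • t.inf' ht f := by rw [hcard]
    _ ≤ ∑ b ∈ t, f b := card_nsmul_le_sum _ _ _ fun b hb => inf'_le f hb

theorem sum_le_sum_of_card_eq_of_forall_sdiff_le [IsOrderedCancelAddMonoid M] [DecidableEq ι]
    {S : Finset ι} (hs : s ⊆ S) (hcard : #s = #t)
    (htop : ∀ a ∈ t, ∀ b ∈ S \ t, f b ≤ f a) : ∑ a ∈ s, f a ≤ ∑ b ∈ t, f b := by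
  refine sum_sdiff_le_sum_sdiff.mp <| sum_le_sum_of_card_eq_of_forall_le
    (card_sdiff_comm hcard) fun a ha b hb => htop b (sdiff_subset hb) a ?_
  obtain ⟨has, hat⟩ := mem_sdiff.mp ha
  exact mem_sdiff.mpr ⟨hs has, hat⟩

end Finset

/-- Objective of problem P4: `V · max_n (x_n τ̄_n) − Σ_{n ∈ A} Z_n`, where
the selection `A` is encoded as a finite set. -/
noncomputable def objP4 {N : ℕ} (hN : 0 < N) (V : ℝ) (τbar Z : Fin N → ℝ)
    (A : Finset (Fin N)) : ℝ :=
  V * (Finset.univ.sup' ⟨⟨0, hN⟩, Finset.mem_univ _⟩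
    fun n => if n ∈ A then τbar n else 0) - ∑ n ∈ A, Z n

theorem objP4_le_objP4 {N : ℕ} (hN : 0 < N) {V : ℝ} (hV : 0 ≤ V) {τbar Z : Fin N → ℝ}
    {A B : Finset (Fin N)} {n : Fin N} (hn : n ∈ A) (hτn : 0 ≤ τbar n)
    (hB : ∀ b ∈ B, τbar b ≤ τbar n) (hsum : ∑ a ∈ A, Z a ≤ ∑ b ∈ B, Z b) :
    objP4 hN V τbar Z B ≤ objP4 hN V τbar Z A := by
  have hB_le : (univ.sup' ⟨⟨0, hN⟩, mem_univ _⟩ fun b => if b ∈ B then τbar b else 0)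
      ≤ τbar n :=
    sup'_le _ _ fun b _ => by
      split_ifs with hb
      exacts [hB b hb, hτn]
  have hA_ge : τbar n ≤ univ.sup' ⟨⟨0, hN⟩, mem_univ _⟩
      fun a => if a ∈ A then τbar a else 0 := by
    simpa only [hn, if_true] using
      le_sup' (fun a => if a ∈ A then τbar a else 0) (mem_univ n)
  exact sub_le_sub (mul_le_mul_of_nonneg_left (hB_le.trans hA_ge) hV) hsum

theorem divide_and_conquer_optimal_general
    {N : ℕ} (hN : 0 < N) (V : ℝ) (hV : 0 ≤ V)
    (τbar Z : Fin N → ℝ) (hτ : ∀ n, 0 ≤ τbar n)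
    (avail : Fin N → Bool)
    (k : ℕ)
    (cand : Fin N → Finset (Fin N))
    (hcand : ∀ nmax, avail nmax = true →
      k ≤ (Finset.univ.filter fun n => avail n = true ∧ τbar n ≤ τbar nmax).card →
      cand nmax ⊆ (Finset.univ.filter fun n => avail n = true ∧ τbar n ≤ τbar nmax) ∧
      (cand nmax).card = k ∧
      ∀ a ∈ cand nmax,
        ∀ b ∈ (Finset.univ.filter fun n => avail n = true ∧ τbar n ≤ τbar nmax) \
            cand nmax, Z b ≤ Z a)
    (best : Fin N) (hbestavail : avail best = true)
    (hbestq : k ≤ (Finset.univ.filter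
      fun n => avail n = true ∧ τbar n ≤ τbar best).card)
    (hbestmin : ∀ nmax, avail nmax = true →
      k ≤ (Finset.univ.filter fun n => avail n = true ∧ τbar n ≤ τbar nmax).card →
      objP4 hN V τbar Z (cand best) ≤ objP4 hN V τbar Z (cand nmax)) :
    (cand best).card = k ∧ (∀ n ∈ cand best, avail n = true) ∧
      ∀ A : Finset (Fin N), A.card = k → (∀ n ∈ A, avail n = true) →
        objP4 hN V τbar Z (cand best) ≤ objP4 hN V τbar Z A := by
  obtain ⟨hbest_sub, hbest_card, -⟩ := hcand best hbestavail hbestq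
  refine ⟨hbest_card, fun n hn => (mem_filter.mp (hbest_sub hn)).2.1,
    fun A hA_card hA_avail => ?_⟩
  rcases A.eq_empty_or_nonempty with rfl | hA
  · rw [card_eq_zero.mp (hbest_card.trans hA_card.symm)]
  obtain ⟨nmax, hnmax, hmax⟩ := A.exists_max_image τbar hA
  have hnmax_avail := hA_avail nmax hnmax
  have hA_sub : A ⊆ univ.filter fun n => avail n = true ∧ τbar n ≤ τbar nmax :=
    fun n hn => mem_filter.mpr ⟨mem_univ n, hA_avail n hn, hmax n hn⟩
  have hq : k ≤ (univ.filter fun n => avail n = true ∧ τbar n ≤ τbar nmax).card :=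
    hA_card ▸ card_le_card hA_sub
  obtain ⟨hsub, hcard, htop⟩ := hcand nmax hnmax_avail hq
  refine (hbestmin nmax hnmax_avail hq).trans <|
    objP4_le_objP4 hN hV hnmax (hτ nmax) (fun n hn => (mem_filter.mp (hsub hn)).2.2) ?_
  exact sum_le_sum_of_card_eq_of_forall_sdiff_le hA_sub (hA_card.trans hcard.symm) htop

/-- Correctness of the divide-and-conquer algorithm for P4: any candidate
family that, for every available `nmax` with enough qualified clients, picks
`k` qualified clients with largest backlogs, and any returned candidate of
minimal objective among those considered, yields an exact optimizer of P4. -/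
theorem divide_and_conquer_optimal
    {N : ℕ} (hN : 0 < N) (m : ℕ) (V : ℝ) (hV : 0 ≤ V)
    (τbar Z : Fin N → ℝ) (hτ : ∀ n, 0 ≤ τbar n) (hZ : ∀ n, 0 ≤ Z n)
    (avail : Fin N → Bool)
    (havail : (Finset.univ.filter fun n => avail n = true).Nonempty)
    (hm : m ≤ N)
    (k : ℕ) (hk : k = min m (Finset.univ.filter fun n => avail n = true).card)
    (cand : Fin N → Finset (Fin N))
    (hcand : ∀ nmax, avail nmax = true →
      k ≤ (Finset.univ.filter fun n => avail n = true ∧ τbar n ≤ τbar nmax).card →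
      cand nmax ⊆ (Finset.univ.filter fun n => avail n = true ∧ τbar n ≤ τbar nmax) ∧
      (cand nmax).card = k ∧
      ∀ a ∈ cand nmax,
        ∀ b ∈ (Finset.univ.filter fun n => avail n = true ∧ τbar n ≤ τbar nmax) \
            cand nmax, Z b ≤ Z a)
    (best : Fin N) (hbestavail : avail best = true)
    (hbestq : k ≤ (Finset.univ.filter
      fun n => avail n = true ∧ τbar n ≤ τbar best).card)
    (hbestmin : ∀ nmax, avail nmax = true →
      k ≤ (Finset.univ.filter fun n => avail n = true ∧ τbar n ≤ τbar nmax).card →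
      objP4 hN V τbar Z (cand best) ≤ objP4 hN V τbar Z (cand nmax)) :
    (cand best).card = k ∧ (∀ n ∈ cand best, avail n = true) ∧
      ∀ A : Finset (Fin N), A.card = k → (∀ n ∈ A, avail n = true) →
        objP4 hN V τbar Z (cand best) ≤ objP4 hN V τbar Z A :=
  divide_and_conquer_optimal_general hN V hV τbar Z hτ avail k cand hcand best hbestavail hbestq
    hbestmin
end
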